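/- For every a ∈ (ZMod 4) × (ZMod 4), the set C^a = {x ∈ V(D(4,0)) : x_1 + x_2 + x_3 + x_4 = a} of vertices of the Doob graph D(4,0) (where x_i ∈ (ZMod 4)×(ZMod 4) are the four coordinates of x) can be partitioned into four codes C^a_0, C^a_1, C^a_2, C^a_3, each with code distance at least 3. -/

import Mathlib

open SimpleGraph

/-- The Shrikhande graph: Cayley graph on `ZMod 4 × ZMod 4` with connection set
`{(0,1),(0,3),(1,0),(3,0),(1,1),(3,3)}`. -/
def shrikhande : SimpleGraph (ZMod 4 × ZMod 4) :=
  SimpleGraph.fromRel (fun x y =>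
    x - y ∈ ({(0, 1), (0, 3), (1, 0), (3, 0), (1, 1), (3, 3)} : Set (ZMod 4 × ZMod 4)))

/-- Vertices of the Doob graph `D(m,n)`. -/
abbrev DoobVertex (m n : ℕ) := (Fin m → ZMod 4 × ZMod 4) × (Fin n → ZMod 4)

/-- The Doob graph `D(m,n)`: the Cartesian (box) product of `m` copies of the
Shrikhande graph and `n` copies of the complete graph `K₄`. Two vertices are
adjacent iff they differ in exactly one coordinate and are adjacent in the
corresponding factor. -/
def doobGraph (m n : ℕ) : SimpleGraph (DoobVertex m n) :=
  SimpleGraph.fromRel (fun x y =>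
    (∃ i, shrikhande.Adj (x.1 i) (y.1 i) ∧ (∀ j, j ≠ i → x.1 j = y.1 j) ∧ x.2 = y.2) ∨
    (∃ i, x.2 i ≠ y.2 i ∧ (∀ j, j ≠ i → x.2 j = y.2 j) ∧ x.1 = y.1))

/-- `f` is a perfect coloring of `G` with quotient matrix `S`: `f` is surjective and
every vertex of color `i` has exactly `S i j` neighbors of color `j`. -/
def IsPerfectColoring {V C : Type*} (G : SimpleGraph V) (f : V → C)
    (S : Matrix C C ℕ) : Prop :=
  Function.Surjective f ∧
    ∀ x c, {y | G.Adj x y ∧ f y = c}.ncard = S (f x) c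

/-!
Reduce `ZMod 4 × ZMod 4` mod 2 onto the field `𝔽₄ = 𝔽₂[ω]`, reading `(a, b)` as `a + bω`.
The four codes are the fibres of the additive syndrome `x ↦ (∑ xᵢ, ∑ cᵢ x̄ᵢ)` with
`(c₀, c₁, c₂, c₃) = (0, 1, ω, ω²)`. Since `D(4,0)` is a Cayley graph on `(ZMod 4 × ZMod 4)⁴`, two
vertices at distance 1 or 2 differ by `g eᵢ` or `g eᵢ + h eⱼ` with `g, h` in the connection set.
Equal first syndromes force `h = -g` and `i ≠ j`; equal second syndromes then give
`(cᵢ - cⱼ) ḡ = 0`, impossible because every connection element is a unit mod 2 and the `cᵢ`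
are distinct.
-/

def shrikhandeConnection : Finset (ZMod 4 × ZMod 4) :=
  {(0, 1), (0, 3), (1, 0), (3, 0), (1, 1), (3, 3)}

lemma shrikhande_adj_iff {x y : ZMod 4 × ZMod 4} :
    shrikhande.Adj x y ↔ y - x ∈ shrikhandeConnection := by
  have key : ∀ d : ZMod 4 × ZMod 4, d ≠ 0 ∧ (-d ∈ shrikhandeConnection ∨ d ∈ shrikhandeConnection)
      ↔ d ∈ shrikhandeConnection := by decide
  rw [shrikhande, fromRel_adj, ← key, ← neg_sub, ne_eq, ← sub_eq_zero, ← neg_eq_zero, neg_sub]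
  simp [shrikhandeConnection]

lemma eq_add_single_sub_iff {ι G : Type*} [DecidableEq ι] [AddCommGroup G] {f g : ι → G} {i : ι} :
    g = f + Pi.single i (g i - f i) ↔ ∀ j ≠ i, g j = f j := by
  refine ⟨fun h j hj => by rw [h]; simp [hj], fun h => funext fun j => ?_⟩
  by_cases hj : j = i
  · subst hj; simp [add_sub_cancel]
  · simp [hj, h j hj]

lemma doobGraph_zero_adj_iff {m : ℕ} {x y : DoobVertex m 0} :
    (doobGraph m 0).Adj x y ↔ ∃ i, ∃ g ∈ shrikhandeConnection, y.1 = x.1 + Pi.single i g := by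
  have hsnd : x.2 = y.2 := Subsingleton.elim _ _
  rw [doobGraph, fromRel_adj]
  constructor
  · rintro ⟨-, (⟨i, hadj, hoff, -⟩ | ⟨i, -⟩) | (⟨i, hadj, hoff, -⟩ | ⟨i, -⟩)⟩
    · exact ⟨i, _, shrikhande_adj_iff.1 hadj, eq_add_single_sub_iff.2 fun j hj => (hoff j hj).symm⟩
    · exact i.elim0
    · exact ⟨i, _, shrikhande_adj_iff.1 hadj.symm, eq_add_single_sub_iff.2 hoff⟩
    · exact i.elim0
  · rintro ⟨i, g, hg, hy⟩
    have hgi : y.1 i = x.1 i + g := by simp [hy]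
    have hg' : y.1 i - x.1 i = g := by rw [hgi]; abel
    refine ⟨fun hxy => ?_, Or.inl (Or.inl ⟨i, shrikhande_adj_iff.2 (hg' ▸ hg), ?_, hsnd⟩)⟩
    · have hg0 : g = 0 := by simpa [hxy] using hgi
      exact absurd (hg0 ▸ hg) (by decide)
    · rw [← hg'] at hy
      exact fun j hj => (eq_add_single_sub_iff.1 hy j hj).symm

lemma doobGraph_zero_reachable_add (m : ℕ) (v : Fin m → ZMod 4 × ZMod 4)
    (x : DoobVertex m 0) : (doobGraph m 0).Reachable x (x.1 + v, x.2) := by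
  let H : AddSubmonoid (Fin m → ZMod 4 × ZMod 4) :=
    { carrier := {v | ∀ x : DoobVertex m 0, (doobGraph m 0).Reachable x (x.1 + v, x.2)}
      zero_mem' := fun x => by simp
      add_mem' := fun {v w} hv hw x => (hv x).trans (by simpa [add_assoc] using hw (x.1 + v, x.2)) }
  have hgen : ∀ i, ∀ g ∈ shrikhandeConnection, Pi.single i g ∈ H :=
    fun i g hg x => (doobGraph_zero_adj_iff.2 ⟨i, g, hg, rfl⟩).reachable
  have hdecomp : ∀ p : ZMod 4 × ZMod 4, p = p.1.val • (1, 0) + p.2.val • (0, 1) := by decide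
  suffices v ∈ H from this x
  rw [← Finset.univ_sum_single v]
  refine H.sum_mem fun i _ => ?_
  rw [hdecomp (v i), Pi.single_add, Pi.single_smul, Pi.single_smul]
  exact add_mem (nsmul_mem (hgen i _ (by decide)) _) (nsmul_mem (hgen i _ (by decide)) _)

lemma doobGraph_zero_preconnected (m : ℕ) : (doobGraph m 0).Preconnected := fun x y => by
  simpa [Prod.ext_iff, Subsingleton.elim x.2 y.2] using doobGraph_zero_reachable_add m (y.1 - x.1) x

section Syndrome

variable {ι G K : Type*} [Fintype ι] [AddCommMonoid G] [AddCommMonoid K]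

def syndrome (ψ : ι → G →+ K) : (ι → G) →+ K :=
  ∑ i, (ψ i).comp (Pi.evalAddMonoidHom (fun _ => G) i)

lemma syndrome_apply (ψ : ι → G →+ K) (x : ι → G) : syndrome ψ x = ∑ i, ψ i (x i) := by
  simp [syndrome]

lemma syndrome_single [DecidableEq ι] (ψ : ι → G →+ K) (i : ι) (g : G) :
    syndrome ψ (Pi.single i g) = ψ i g := by
  simp [syndrome_apply, Pi.single_apply, apply_ite]

end Syndrome

theorem three_le_dist_of_syndrome_eq {m : ℕ} {K : Type*} [AddCommGroup K]
    (ψ : Fin m → ZMod 4 × ZMod 4 →+ K) (hinj : ∀ i, Function.Injective (ψ i))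
    (hpair : ∀ i j, i ≠ j → ∀ g ∈ shrikhandeConnection, ∀ h ∈ shrikhandeConnection,
      ψ i g + ψ j h ≠ 0)
    {x y : DoobVertex m 0} (hne : x ≠ y) (hxy : syndrome ψ x.1 = syndrome ψ y.1) :
    3 ≤ (doobGraph m 0).dist x y := by
  have hnadj : ¬ (doobGraph m 0).Adj x y := by
    intro hadj
    obtain ⟨i, g, hg, hy⟩ := doobGraph_zero_adj_iff.1 hadj
    rw [hy, map_add, syndrome_single, left_eq_add, ← map_zero (ψ i)] at hxy
    exact absurd (hinj i hxy ▸ hg) (by decide)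
  have hcommon : (doobGraph m 0).commonNeighbors x y = ∅ := by
    refine Set.eq_empty_of_forall_notMem fun z hz => ?_
    obtain ⟨hxz, hyz⟩ := (mem_commonNeighbors _).1 hz
    obtain ⟨i, g, hg, hz⟩ := doobGraph_zero_adj_iff.1 hxz
    obtain ⟨j, h, hh, hy⟩ := doobGraph_zero_adj_iff.1 hyz.symm
    rw [hy, hz, add_assoc, map_add, map_add, syndrome_single, syndrome_single, left_eq_add] at hxy
    obtain rfl | hij := eq_or_ne i j
    · rw [← map_add, ← map_zero (ψ i)] at hxy
      refine hne (Prod.ext ?_ (Subsingleton.elim _ _))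
      rw [hy, hz, add_assoc, ← Pi.single_add, hinj i hxy, Pi.single_zero, add_zero]
    · exact hpair i j hij g hg h hh hxy
  -- `dist` is `0` between unreachable vertices, so connectivity is needed here.
  have h2 : 2 < (doobGraph m 0).edist x y := two_lt_edist_iff.2 ⟨hne, hnadj, hcommon⟩
  rw [← (doobGraph_zero_preconnected m x y).coe_dist_eq_edist] at h2
  exact_mod_cast h2

def reduceModTwo : ZMod 4 × ZMod 4 →+ ZMod 2 × ZMod 2 :=
  let r := (ZMod.castHom (by norm_num : 2 ∣ 4) (ZMod 2)).toAddMonoidHom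
  r.prodMap r

/-- Multiplication by `ω` on `𝔽₄ = 𝔽₂[ω]` (with `ω² = ω + 1`), in the basis `(1, ω)`. -/
def mulOmega : ZMod 2 × ZMod 2 →+ ZMod 2 × ZMod 2 :=
  (AddMonoidHom.snd _ _).prod (AddMonoidHom.fst _ _ + AddMonoidHom.snd _ _)

def coordinateWeight : Fin 4 → ZMod 4 × ZMod 4 →+ ZMod 2 × ZMod 2 :=
  ![0, reduceModTwo, mulOmega.comp reduceModTwo, (mulOmega.comp mulOmega).comp reduceModTwo]

def doobCodeCheck (i : Fin 4) : ZMod 4 × ZMod 4 →+ (ZMod 4 × ZMod 4) × (ZMod 2 × ZMod 2) :=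
  (AddMonoidHom.id _).prod (coordinateWeight i)

def doobCode (a : ZMod 4 × ZMod 4) (k : ZMod 2 × ZMod 2) : Set (DoobVertex 4 0) :=
  {x | syndrome doobCodeCheck x.1 = (a, k)}

lemma syndrome_doobCodeCheck_fst (x : Fin 4 → ZMod 4 × ZMod 4) :
    (syndrome doobCodeCheck x).1 = ∑ p, x p := by
  simp [syndrome_apply, Prod.fst_sum, doobCodeCheck]

lemma doobCode_nonempty (a : ZMod 4 × ZMod 4) (k : ZMod 2 × ZMod 2) :
    (doobCode a k).Nonempty := by
  obtain ⟨g, hg⟩ : ∃ g, reduceModTwo g = k := by revert k; decide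
  refine ⟨(Pi.single 0 (a - g) + Pi.single 1 g, finZeroElim), ?_⟩
  simp [doobCode, map_add, syndrome_single, doobCodeCheck, hg, coordinateWeight]

lemma doobCode_disjoint (a : ZMod 4 × ZMod 4) {k k' : ZMod 2 × ZMod 2} (hk : k ≠ k') :
    Disjoint (doobCode a k) (doobCode a k') :=
  Set.disjoint_left.2 fun _ hx hx' => hk (Prod.ext_iff.1 (hx.symm.trans hx')).2

lemma iUnion_doobCode (a : ZMod 4 × ZMod 4) :
    ⋃ k, doobCode a k = {x : DoobVertex 4 0 | ∑ p, x.1 p = a} := by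
  ext x
  rw [Set.mem_iUnion]
  constructor
  · rintro ⟨k, hk⟩
    exact (syndrome_doobCodeCheck_fst x.1).symm.trans (congrArg Prod.fst hk)
  · intro h
    exact ⟨_, Prod.ext ((syndrome_doobCodeCheck_fst x.1).trans h) rfl⟩

lemma doobCode_three_le_dist {a : ZMod 4 × ZMod 4} {k : ZMod 2 × ZMod 2} {x y : DoobVertex 4 0}
    (hx : x ∈ doobCode a k) (hy : y ∈ doobCode a k) (hne : x ≠ y) :
    3 ≤ (doobGraph 4 0).dist x y :=
  three_le_dist_of_syndrome_eq doobCodeCheck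
    (fun _ _ _ h => congrArg Prod.fst h) (by decide) hne (hx.trans hy.symm)

theorem stmt_10 (a : ZMod 4 × ZMod 4) :
    ∃ C : Fin 4 → Set (DoobVertex 4 0),
      (∀ i, (C i).Nonempty) ∧
      (∀ i j, i ≠ j → Disjoint (C i) (C j)) ∧
      (⋃ i, C i) = {x : DoobVertex 4 0 | (∑ p, x.1 p) = a} ∧
      (∀ i, ∀ x ∈ C i, ∀ y ∈ C i, x ≠ y → 3 ≤ (doobGraph 4 0).dist x y) := by
  let e : Fin 4 ≃ ZMod 2 × ZMod 2 := Fintype.equivOfCardEq rfl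
  refine ⟨fun i => doobCode a (e i), fun i => doobCode_nonempty a (e i),
    fun i j hij => doobCode_disjoint a (e.injective.ne hij), ?_,
    fun i x hx y hy hne => doobCode_three_le_dist hx hy hne⟩
  rw [e.surjective.iUnion_comp (doobCode a), iUnion_doobCode]
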